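/- Finite model property with an explicit bound for LC⊳: if a formula φ of length l is not LC⊳-valid, then φ is refuted at the root of a finite rooted LC⊳-model having at most l+1 worlds. -/

import Mathlib

/-- Formulas: atoms, ⊤, ⊥, ∧, ∨, →, irreflexive implication ⊳ (`iimp`), later ▷ (`later`). -/
inductive Fm : Type where
  | atom : ℕ → Fm
  | top : Fm
  | bot : Fm
  | and : Fm → Fm → Fm
  | or : Fm → Fm → Fm
  | imp : Fm → Fm → Fm
  | iimp : Fm → Fm → Fm
  | later : Fm → Fm
deriving DecidableEq

/-- A KM-model: nonempty set of worlds, transitive converse-well-founded relation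
(no infinite ascending chain), persistent valuation of atoms. -/
structure KMModel where
  W : Type
  nonempty : Nonempty W
  R : W → W → Prop
  trans : ∀ {x y z}, R x y → R y z → R x z
  cwf : ¬ ∃ f : ℕ → W, ∀ n, R (f n) (f (n + 1))
  val : ℕ → W → Prop
  persist : ∀ p {w x}, val p w → R w x → val p x

/-- Kripke forcing in a KM-model. -/
def KMModel.force (M : KMModel) : Fm → M.W → Prop
  | .atom p, w => M.val p w
  | .top, _ => True
  | .bot, _ => False
  | .and a b, w => M.force a w ∧ M.force b w
  | .or a b, w => M.force a w ∨ M.force b w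
  | .imp a b, w => ∀ x, (w = x ∨ M.R w x) → M.force a x → M.force b x
  | .iimp a b, w => ∀ x, M.R w x → M.force a x → M.force b x
  | .later a, w => ∀ x, M.R w x → M.force a x

/-- An LC⊳-model is a KM-model whose relation is moreover connected. -/
structure LCModel extends KMModel where
  conn : ∀ x y : W, x = y ∨ R x y ∨ R y x

/-- KM-validity. -/
def KMValid (φ : Fm) : Prop :=
  ∀ (M : KMModel) (w : M.W), M.force φ w

/-- LC⊳-validity. -/
def LCValid (φ : Fm) : Prop :=
  ∀ (M : LCModel) (w : M.W), M.toKMModel.force φ w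

/-- ω-semantics forcing (worlds are positive integers). -/
def wforce (η : ℕ → ℕ+ → Prop) : Fm → ℕ+ → Prop
  | .atom p, j => η p j
  | .top, _ => True
  | .bot, _ => False
  | .and a b, j => wforce η a j ∧ wforce η b j
  | .or a b, j => wforce η a j ∨ wforce η b j
  | .imp a b, j => ∀ k ≤ j, wforce η a k → wforce η b k
  | .iimp a b, j => ∀ k < j, wforce η a k → wforce η b k
  | .later a, j => ∀ k < j, wforce η a k

/-- `iimps G` is the set {γ ⊳ γ' | (γ,γ') ∈ G}. -/
def iimps (G : Finset (Fm × Fm)) : Finset Fm := G.image fun p => Fm.iimp p.1 p.2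

/-- `impsOf G` is the set {γ → γ' | (γ,γ') ∈ G}. -/
def impsOf (G : Finset (Fm × Fm)) : Finset Fm := G.image fun p => Fm.imp p.1 p.2

/-- `laters Θ` is the set {▷θ | θ ∈ Θ}. -/
def laters (Θ : Finset Fm) : Finset Fm := Θ.image Fm.later

def Fm.isAtom : Fm → Prop
  | .atom _ => True
  | _ => False

/-- The sequent calculus SC_LC⊳ on sequents of finite sets of formulas. -/
inductive DerivLC : Finset Fm → Finset Fm → Prop where
  | topR (Γ Δ) : DerivLC Γ (insert Fm.top Δ)
  | botL (Γ Δ) : DerivLC (insert Fm.bot Γ) Δ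
  | id (Γ Δ φ) : DerivLC (insert φ Γ) (insert φ Δ)
  | andL (Γ Δ φ ψ) : DerivLC (insert φ (insert ψ Γ)) Δ → DerivLC (insert (φ.and ψ) Γ) Δ
  | andR (Γ Δ φ ψ) : DerivLC Γ (insert φ Δ) → DerivLC Γ (insert ψ Δ) →
      DerivLC Γ (insert (φ.and ψ) Δ)
  | orL (Γ Δ φ ψ) : DerivLC (insert φ Γ) Δ → DerivLC (insert ψ Γ) Δ →
      DerivLC (insert (φ.or ψ) Γ) Δ
  | orR (Γ Δ φ ψ) : DerivLC Γ (insert φ (insert ψ Δ)) → DerivLC Γ (insert (φ.or ψ) Δ)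
  | impL (Γ Δ φ ψ) : DerivLC (insert (φ.iimp ψ) Γ) (insert φ Δ) →
      DerivLC (insert ψ (insert (φ.iimp ψ) Γ)) Δ →
      DerivLC (insert (φ.imp ψ) Γ) Δ
  | impR (Γ Δ φ ψ) : DerivLC (insert φ Γ) (insert ψ Δ) → DerivLC Γ (insert (φ.iimp ψ) Δ) →
      DerivLC Γ (insert (φ.imp ψ) Δ)
  | step (Sl Sr Θ Φ : Finset Fm) (G D : Finset (Fm × Fm)) :
      (∀ a ∈ Sl, a.isAtom) → (∀ a ∈ Sr, a.isAtom) →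
      Sl ∩ Sr = ∅ → Fm.bot ∉ Sl → Fm.top ∉ Sr →
      (D.Nonempty ∨ Φ.Nonempty) →
      (∀ pq ∈ D, DerivLC
          (Sl ∪ impsOf G ∪ Θ ∪ laters Θ ∪ ({Fm.iimp pq.1 pq.2, pq.1} : Finset Fm))
          (insert pq.2 ((impsOf D).erase (Fm.imp pq.1 pq.2) ∪ Φ))) →
      (∀ χ ∈ Φ, DerivLC
          (Sl ∪ Θ ∪ laters Θ ∪ impsOf G ∪ ({Fm.later χ} : Finset Fm))
          (impsOf D ∪ Φ)) →
      DerivLC (Sl ∪ laters Θ ∪ iimps G) (iimps D ∪ laters Φ ∪ Sr)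

/-- The sequent calculus SC_KM: same static rules, transitional rules (⊳R) and (▷R). -/
inductive DerivKM : Finset Fm → Finset Fm → Prop where
  | topR (Γ Δ) : DerivKM Γ (insert Fm.top Δ)
  | botL (Γ Δ) : DerivKM (insert Fm.bot Γ) Δ
  | id (Γ Δ φ) : DerivKM (insert φ Γ) (insert φ Δ)
  | andL (Γ Δ φ ψ) : DerivKM (insert φ (insert ψ Γ)) Δ → DerivKM (insert (φ.and ψ) Γ) Δ
  | andR (Γ Δ φ ψ) : DerivKM Γ (insert φ Δ) → DerivKM Γ (insert ψ Δ) →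
      DerivKM Γ (insert (φ.and ψ) Δ)
  | orL (Γ Δ φ ψ) : DerivKM (insert φ Γ) Δ → DerivKM (insert ψ Γ) Δ →
      DerivKM (insert (φ.or ψ) Γ) Δ
  | orR (Γ Δ φ ψ) : DerivKM Γ (insert φ (insert ψ Δ)) → DerivKM Γ (insert (φ.or ψ) Δ)
  | impL (Γ Δ φ ψ) : DerivKM (insert (φ.iimp ψ) Γ) (insert φ Δ) →
      DerivKM (insert ψ (insert (φ.iimp ψ) Γ)) Δ →
      DerivKM (insert (φ.imp ψ) Γ) Δ
  | impR (Γ Δ φ ψ) : DerivKM (insert φ Γ) (insert ψ Δ) → DerivKM Γ (insert (φ.iimp ψ) Δ) →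
      DerivKM Γ (insert (φ.imp ψ) Δ)
  | iimpR (Sl Sr Θ Φ : Finset Fm) (G D : Finset (Fm × Fm)) (φ ψ : Fm) :
      (∀ a ∈ Sl, a.isAtom) → (∀ a ∈ Sr, a.isAtom) →
      Sl ∩ Sr = ∅ → Fm.bot ∉ Sl → Fm.top ∉ Sr →
      DerivKM (Sl ∪ Θ ∪ laters Θ ∪ impsOf G ∪ ({Fm.iimp φ ψ, φ} : Finset Fm)) {ψ} →
      DerivKM (Sl ∪ laters Θ ∪ iimps G) (insert (Fm.iimp φ ψ) (iimps D ∪ laters Φ ∪ Sr))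
  | laterR (Sl Sr Θ Φ : Finset Fm) (G D : Finset (Fm × Fm)) (φ : Fm) :
      (∀ a ∈ Sl, a.isAtom) → (∀ a ∈ Sr, a.isAtom) →
      Sl ∩ Sr = ∅ → Fm.bot ∉ Sl → Fm.top ∉ Sr →
      DerivKM (Sl ∪ Θ ∪ laters Θ ∪ impsOf G ∪ ({Fm.later φ} : Finset Fm)) {φ} →
      DerivKM (Sl ∪ laters Θ ∪ iimps G) (insert (Fm.later φ) (iimps D ∪ laters Φ ∪ Sr))

/-- A sequent is refutable (over LC⊳-models) if some world of some LC⊳-model forces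
every antecedent formula and no succedent formula. -/
def RefutableLC (Γ Δ : Finset Fm) : Prop :=
  ∃ (M : LCModel) (w : M.W),
    (∀ γ ∈ Γ, M.toKMModel.force γ w) ∧ ∀ δ ∈ Δ, ¬ M.toKMModel.force δ w

/-- A sequent is refutable (over KM-models) if some world of some KM-model forces
every antecedent formula and no succedent formula. -/
def RefutableKM (Γ Δ : Finset Fm) : Prop :=
  ∃ (M : KMModel) (w : M.W),
    (∀ γ ∈ Γ, M.force γ w) ∧ ∀ δ ∈ Δ, ¬ M.force δ w

/-- Length of a formula: number of symbol occurrences. -/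
def Fm.len : Fm → ℕ
  | .atom _ => 1
  | .top => 1
  | .bot => 1
  | .and a b => a.len + b.len + 1
  | .or a b => a.len + b.len + 1
  | .imp a b => a.len + b.len + 1
  | .iimp a b => a.len + b.len + 1
  | .later a => a.len + 1

/-- An explicit numeric code for formulas. -/
def Fm.code : Fm → ℕ
  | .atom p => Nat.pair 0 p
  | .top => Nat.pair 1 0
  | .bot => Nat.pair 2 0
  | .and a b => Nat.pair 3 (Nat.pair a.code b.code)
  | .or a b => Nat.pair 4 (Nat.pair a.code b.code)
  | .imp a b => Nat.pair 5 (Nat.pair a.code b.code)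
  | .iimp a b => Nat.pair 6 (Nat.pair a.code b.code)
  | .later a => Nat.pair 7 a.code

/-- Formulas with no ⊳ and no ▷. -/
def Fm.noModal : Fm → Prop
  | .atom _ => True
  | .top => True
  | .bot => True
  | .and a b => a.noModal ∧ b.noModal
  | .or a b => a.noModal ∧ b.noModal
  | .imp a b => a.noModal ∧ b.noModal
  | .iimp _ _ => False
  | .later _ => False

/-- Classical Boolean evaluation (junk values on the modal connectives). -/
def Fm.beval (v : ℕ → Bool) : Fm → Bool
  | .atom p => v p
  | .top => true
  | .bot => false
  | .and a b => a.beval v && b.beval v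
  | .or a b => a.beval v || b.beval v
  | .imp a b => !(a.beval v) || b.beval v
  | .iimp _ _ => false
  | .later _ => false

/-!
Let `M, w` refute `φ`. Restrict `M` to the worlds above `w` and identify worlds forcing the same
subformulas of `φ` (the *φ-theory* of a world), ordering the theories by strict inclusion. Since
the frame is connected, theories form a chain of subsets of the subformulas of `φ`, so there are
at most `l + 1` of them. The truth lemma for `⊳` and `▷` works because, by converse
well-foundedness, every world has a last world with the same theory, and all successors of that
world have strictly larger theories.
-/

namespace Fm

def subformulas : Fm → Finset Fm
  | .atom p => {.atom p}
  | .top => {.top}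
  | .bot => {.bot}
  | .and a b => insert (.and a b) (a.subformulas ∪ b.subformulas)
  | .or a b => insert (.or a b) (a.subformulas ∪ b.subformulas)
  | .imp a b => insert (.imp a b) (a.subformulas ∪ b.subformulas)
  | .iimp a b => insert (.iimp a b) (a.subformulas ∪ b.subformulas)
  | .later a => insert (.later a) a.subformulas

theorem mem_subformulas_self (ψ : Fm) : ψ ∈ ψ.subformulas := by
  cases ψ <;> simp [subformulas]

theorem card_subformulas_le_len (ψ : Fm) : ψ.subformulas.card ≤ ψ.len := by
  induction ψ <;> simp only [subformulas, len, Finset.card_singleton, le_refl] <;>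
    grind [Finset.card_insert_le, Finset.card_union_le]

end Fm

namespace KMModel

variable (M : KMModel)

theorem force_of_R {ψ : Fm} {x y : M.W} (hxy : M.R x y) (hx : M.force ψ x) : M.force ψ y := by
  induction ψ generalizing x y with
  | atom p => exact M.persist p hx hxy
  | top | bot => exact hx
  | and a b iha ihb => exact ⟨iha hxy hx.1, ihb hxy hx.2⟩
  | or a b iha ihb => exact hx.imp (iha hxy) (ihb hxy)
  | imp a b => exact fun z hyz => hx z (Or.inr (hyz.elim (· ▸ hxy) (M.trans hxy)))
  | iimp a b => exact fun z hyz => hx z (M.trans hxy hyz)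
  | later a => exact fun z hyz => hx z (M.trans hxy hyz)

theorem wellFounded_flip_R : WellFounded (flip M.R) :=
  wellFounded_iff_isEmpty_descending_chain.mpr ⟨fun ⟨f, hf⟩ => M.cwf ⟨f, hf⟩⟩

theorem eq_or_R_trans {x y z : M.W} (hxy : x = y ∨ M.R x y) (hyz : y = z ∨ M.R y z) :
    x = z ∨ M.R x z := by
  rcases hxy with rfl | hxy
  · exact hyz
  · exact Or.inr (hyz.elim (· ▸ hxy) (M.trans hxy))

def cone (w : M.W) : KMModel where
  W := {x // w = x ∨ M.R w x}
  nonempty := ⟨⟨w, Or.inl rfl⟩⟩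
  R x y := M.R x y
  trans := M.trans
  cwf := fun ⟨f, hf⟩ => M.cwf ⟨fun n => (f n).1, hf⟩
  val p x := M.val p x
  persist p _ _ := M.persist p

theorem cone_rooted (w : M.W) (x : (M.cone w).W) :
    x = ⟨w, Or.inl rfl⟩ ∨ (M.cone w).R ⟨w, Or.inl rfl⟩ x :=
  x.2.imp_left fun h => Subtype.ext h.symm

theorem force_cone {w : M.W} (ψ : Fm) (x : (M.cone w).W) :
    (M.cone w).force ψ x ↔ M.force ψ x.1 := by
  induction ψ generalizing x with
  | atom p | top | bot => rfl
  | and a b iha ihb => exact and_congr (iha x) (ihb x)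
  | or a b iha ihb => exact or_congr (iha x) (ihb x)
  | imp a b iha ihb =>
      refine ⟨fun h y hxy ha => ?_, fun h y hxy ha => ?_⟩
      · have hy : w = y ∨ M.R w y := M.eq_or_R_trans x.2 hxy
        exact (ihb ⟨y, hy⟩).mp (h ⟨y, hy⟩ (hxy.imp_left Subtype.ext) ((iha ⟨y, hy⟩).mpr ha))
      · exact (ihb y).mpr (h y.1 (hxy.imp_left (congrArg Subtype.val)) ((iha y).mp ha))
  | iimp a b iha ihb =>
      refine ⟨fun h y hxy ha => ?_, fun h y hxy ha => ?_⟩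
      · have hy : w = y ∨ M.R w y := M.eq_or_R_trans x.2 (Or.inr hxy)
        exact (ihb ⟨y, hy⟩).mp (h ⟨y, hy⟩ hxy ((iha ⟨y, hy⟩).mpr ha))
      · exact (ihb y).mpr (h y.1 hxy ((iha y).mp ha))
  | later a iha =>
      refine ⟨fun h y hxy => ?_, fun h y hxy => (iha y).mpr (h y.1 hxy)⟩
      have hy : w = y ∨ M.R w y := M.eq_or_R_trans x.2 (Or.inr hxy)
      exact (iha ⟨y, hy⟩).mp (h ⟨y, hy⟩ hxy)

open Classical in
noncomputable def theory (φ : Fm) (x : M.W) : Finset Fm :=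
  φ.subformulas.filter (M.force · x)

variable {M}

theorem mem_theory {φ ψ : Fm} {x : M.W} (hψ : ψ ∈ φ.subformulas) :
    ψ ∈ M.theory φ x ↔ M.force ψ x := by
  classical
  simp [theory, hψ]

theorem theory_subset_subformulas (φ : Fm) (x : M.W) : M.theory φ x ⊆ φ.subformulas := by
  classical
  exact Finset.filter_subset _ _

theorem card_le_of_mem_range_theory {φ : Fm} {A : Finset Fm} (hA : A ∈ Set.range (M.theory φ)) :
    A.card ≤ φ.len := by
  obtain ⟨x, rfl⟩ := hA
  exact (Finset.card_le_card (theory_subset_subformulas φ x)).trans φ.card_subformulas_le_len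

theorem theory_mono (φ : Fm) {x y : M.W} (hxy : M.R x y) : M.theory φ x ⊆ M.theory φ y := by
  classical
  intro ψ
  simp only [theory, Finset.mem_filter]
  exact And.imp_right (M.force_of_R hxy)

theorem force_iff_of_theory_eq {φ ψ : Fm} (hψ : ψ ∈ φ.subformulas) {x y : M.W}
    (h : M.theory φ x = M.theory φ y) : M.force ψ x ↔ M.force ψ y := by
  rw [← mem_theory hψ, h, mem_theory hψ]

theorem exists_theory_eq_forall_R_ssubset (φ : Fm) (x : M.W) :
    ∃ m, M.theory φ m = M.theory φ x ∧ ∀ y, M.R m y → M.theory φ m ⊂ M.theory φ y := by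
  obtain ⟨m, hm, hmax⟩ := M.wellFounded_flip_R.has_min {z | M.theory φ z = M.theory φ x} ⟨x, rfl⟩
  refine ⟨m, hm, fun y hmy => (theory_mono φ hmy).ssubset_of_ne fun h => ?_⟩
  exact hmax y (h.symm.trans hm) hmy

end KMModel

namespace LCModel

variable (M : LCModel)

def cone (w : M.W) : LCModel where
  toKMModel := M.toKMModel.cone w
  conn x y := (M.conn x.1 y.1).imp_left Subtype.ext

variable {M}

theorem theory_total (φ : Fm) (x y : M.W) :
    M.theory φ x ⊆ M.theory φ y ∨ M.theory φ y ⊆ M.theory φ x := by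
  rcases M.conn x y with rfl | hxy | hyx
  exacts [Or.inl subset_rfl, Or.inl (KMModel.theory_mono φ hxy), Or.inr (KMModel.theory_mono φ hyx)]

theorem R_of_theory_ssubset {φ : Fm} {x y : M.W} (h : M.theory φ x ⊂ M.theory φ y) : M.R x y := by
  rcases M.conn x y with rfl | hxy | hyx
  exacts [absurd h (ssubset_irrefl _), hxy, absurd (KMModel.theory_mono φ hyx) h.not_subset]

theorem force_iff_forall_theory_ssubset {φ ψ : Fm} (hψ : ψ ∈ φ.subformulas) {P : M.W → Prop}
    (hP : ∀ x, M.force ψ x ↔ ∀ y, M.R x y → P y) (x : M.W) :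
    M.force ψ x ↔ ∀ y, M.theory φ x ⊂ M.theory φ y → P y := by
  obtain ⟨m, hmx, hm⟩ := M.exists_theory_eq_forall_R_ssubset φ x
  rw [← KMModel.force_iff_of_theory_eq hψ hmx, hP, ← hmx]
  exact ⟨fun h y hy => h y (R_of_theory_ssubset hy), fun h y hy => h y (hm y hy)⟩

theorem forall_eq_or_R_iff_forall_theory_subset {φ : Fm} {P : M.W → Prop}
    (hP : ∀ y z, M.theory φ y = M.theory φ z → (P y ↔ P z)) {x : M.W} :
    (∀ y, x = y ∨ M.R x y → P y) ↔ ∀ y, M.theory φ x ⊆ M.theory φ y → P y := by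
  refine ⟨fun h y hxy => ?_, fun h y hxy => h y ?_⟩
  · rcases hxy.eq_or_ssubset with heq | hssub
    · exact (hP x y heq).mp (h x (Or.inl rfl))
    · exact h y (Or.inr (R_of_theory_ssubset hssub))
  · rcases hxy with rfl | hxy
    exacts [subset_rfl, KMModel.theory_mono φ hxy]

variable (M)

noncomputable def filtration (φ : Fm) : LCModel where
  W := {A : Finset Fm // ∃ x, M.theory φ x = A}
  nonempty := M.nonempty.map fun x => ⟨_, x, rfl⟩
  R A B := A.1 ⊂ B.1
  trans := lt_trans
  cwf := by
    rintro ⟨f, hf⟩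
    have hmono : StrictMono fun n => (f n).1.card :=
      strictMono_nat_of_lt_succ fun n => Finset.card_lt_card (hf n)
    have hbound := KMModel.card_le_of_mem_range_theory (f (φ.len + 1)).2
    have := hmono.le_apply (x := φ.len + 1)
    omega
  val p A := Fm.atom p ∈ A.1
  persist _ _ _ hA hAB := hAB.subset hA
  conn := by
    rintro ⟨_, x, rfl⟩ ⟨_, y, rfl⟩
    rcases eq_or_ne (M.theory φ x) (M.theory φ y) with h | h
    · exact Or.inl (Subtype.ext h)
    · exact Or.inr ((theory_total φ x y).imp (·.ssubset_of_ne h) (·.ssubset_of_ne h.symm))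

theorem finite_filtration (φ : Fm) : Finite (M.filtration φ).W := by
  refine Set.Finite.to_subtype (s := {A | ∃ x, M.theory φ x = A})
    (φ.subformulas.powerset.finite_toSet.subset ?_)
  rintro _ ⟨x, rfl⟩
  exact Finset.mem_powerset.mpr (KMModel.theory_subset_subformulas φ x)

theorem injective_card_filtration (φ : Fm) :
    Function.Injective fun A : (M.filtration φ).W => A.1.card := by
  rintro ⟨_, x, rfl⟩ ⟨_, y, rfl⟩ hxy
  refine Subtype.ext ?_
  rcases theory_total φ x y with h | h
  exacts [Finset.eq_of_subset_of_card_le h hxy.ge, (Finset.eq_of_subset_of_card_le h hxy.le).symm]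

theorem card_filtration_le (φ : Fm) : Nat.card (M.filtration φ).W ≤ φ.len + 1 := by
  let f (A : (M.filtration φ).W) : Fin (φ.len + 1) :=
    ⟨A.1.card, Nat.lt_succ_of_le (KMModel.card_le_of_mem_range_theory A.2)⟩
  simpa using Nat.card_le_card_of_injective f fun A B h =>
    M.injective_card_filtration φ (congrArg Fin.val h)

theorem filtration_rooted (φ : Fm) {r : M.W} (hr : ∀ x, x = r ∨ M.R r x) (A : (M.filtration φ).W) :
    A = ⟨M.theory φ r, r, rfl⟩ ∨ (M.filtration φ).R ⟨M.theory φ r, r, rfl⟩ A := by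
  obtain ⟨_, x, rfl⟩ := A
  rcases eq_or_ne (M.theory φ r) (M.theory φ x) with h | h
  · exact Or.inl (Subtype.ext h.symm)
  · have hrx : M.theory φ r ⊆ M.theory φ x :=
      (hr x).elim (fun e => e ▸ subset_rfl) (KMModel.theory_mono φ)
    exact Or.inr (hrx.ssubset_of_ne h)

theorem forall_R_filtration_iff {φ : Fm} {x : M.W} {P : (M.filtration φ).W → Prop} :
    (∀ A, (M.filtration φ).R ⟨M.theory φ x, x, rfl⟩ A → P A) ↔
      ∀ y, M.theory φ x ⊂ M.theory φ y → P ⟨M.theory φ y, y, rfl⟩ :=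
  ⟨fun h y => h ⟨_, y, rfl⟩, fun h ⟨_, y, hy⟩ => hy ▸ h y⟩

theorem forall_eq_or_R_filtration_iff {φ : Fm} {x : M.W} {P : (M.filtration φ).W → Prop} :
    (∀ A, (⟨M.theory φ x, x, rfl⟩ = A ∨ (M.filtration φ).R ⟨M.theory φ x, x, rfl⟩ A) → P A) ↔
      ∀ y, M.theory φ x ⊆ M.theory φ y → P ⟨M.theory φ y, y, rfl⟩ := by
  refine ⟨fun h y hxy => h _ ?_, fun h ⟨_, y, hy⟩ hA => ?_⟩
  · rcases hxy.eq_or_ssubset with heq | hssub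
    exacts [Or.inl (Subtype.ext heq), Or.inr hssub]
  · subst hy
    exact h y (hA.elim (fun e => (congrArg Subtype.val e).le) (·.subset))

theorem force_filtration {φ ψ : Fm} (hψ : ψ.subformulas ⊆ φ.subformulas) (x : M.W) :
    (M.filtration φ).force ψ ⟨M.theory φ x, x, rfl⟩ ↔ M.force ψ x := by
  induction ψ generalizing x with
  | atom p => exact KMModel.mem_theory (hψ (Fm.mem_subformulas_self _))
  | top | bot => rfl
  | and a b iha ihb =>
      simp only [Fm.subformulas, Finset.insert_subset_iff, Finset.union_subset_iff] at hψ
      exact and_congr (iha hψ.2.1 x) (ihb hψ.2.2 x)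
  | or a b iha ihb =>
      simp only [Fm.subformulas, Finset.insert_subset_iff, Finset.union_subset_iff] at hψ
      exact or_congr (iha hψ.2.1 x) (ihb hψ.2.2 x)
  | imp a b iha ihb =>
      simp only [Fm.subformulas, Finset.insert_subset_iff, Finset.union_subset_iff] at hψ
      have ha := hψ.2.1 a.mem_subformulas_self
      have hb := hψ.2.2 b.mem_subformulas_self
      change (∀ A, (_ = A ∨ _) → _ → _) ↔ ∀ y, (x = y ∨ M.R x y) → M.force a y → M.force b y
      rw [forall_eq_or_R_filtration_iff, forall_eq_or_R_iff_forall_theory_subset fun y z h =>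
        imp_congr (KMModel.force_iff_of_theory_eq ha h) (KMModel.force_iff_of_theory_eq hb h)]
      simp only [iha hψ.2.1, ihb hψ.2.2]
  | iimp a b iha ihb =>
      simp only [Fm.subformulas, Finset.insert_subset_iff, Finset.union_subset_iff] at hψ
      rw [force_iff_forall_theory_ssubset hψ.1 (P := fun y => M.force a y → M.force b y)
        fun _ => Iff.rfl]
      change (∀ A, _ → _ → _) ↔ _
      rw [forall_R_filtration_iff]
      simp only [iha hψ.2.1, ihb hψ.2.2]
  | later a iha =>
      simp only [Fm.subformulas, Finset.insert_subset_iff] at hψ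
      rw [force_iff_forall_theory_ssubset hψ.1 (P := M.force a) fun _ => Iff.rfl]
      change (∀ A, _ → _) ↔ _
      rw [forall_R_filtration_iff]
      simp only [iha hψ.2]

end LCModel

/-- finite model property for LC⊳ with bound l+1. -/
theorem lc_fmp (φ : Fm) (h : ¬ LCValid φ) :
    ∃ (M : LCModel) (r : M.W), Finite M.W ∧ Nat.card M.W ≤ φ.len + 1 ∧
      (∀ x : M.W, x = r ∨ M.R r x) ∧ ¬ M.toKMModel.force φ r := by
  obtain ⟨M, w, hw⟩ : ∃ (M : LCModel) (w : M.W), ¬ M.force φ w := by simpa [LCValid] using h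
  let C := M.cone w
  let r : C.W := ⟨w, Or.inl rfl⟩
  refine ⟨C.filtration φ, ⟨C.theory φ r, r, rfl⟩, C.finite_filtration φ, C.card_filtration_le φ,
    C.filtration_rooted φ (M.toKMModel.cone_rooted w), ?_⟩
  rw [C.force_filtration subset_rfl r]
  exact (M.toKMModel.force_cone φ r).not.mpr hw
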